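/- The Fibonacci sequence is cobweb-admissible: the Fibonomial coefficient Fib_n!/(Fib_k! · Fib_{n-k}!) is an integer for all 0 ≤ k ≤ n, where Fib_n is the n-th Fibonacci number and Fib_n! = ∏_{i=1}^n Fib_i. -/
import Mathlib

def Ffac (n : ℕ) : ℕ := ∏ i ∈ Finset.Icc 1 n, Nat.fib i

lemma Ffac_succ (n : ℕ) : Ffac (n+1) = Ffac n * Nat.fib (n+1) := by
  unfold Ffac
  rw [Finset.prod_Icc_succ_top (by omega)]

lemma Ffac_key : ∀ n k, k ≤ n → Ffac k * Ffac (n - k) ∣ Ffac n := by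
  intro n
  induction n with
  | zero => intro k hk; interval_cases k; simp [Ffac]
  | succ n ih =>
    intro k hk
    rcases Nat.eq_zero_or_pos k with rfl | hk0
    · simp [Ffac]
    rcases eq_or_lt_of_le hk with rfl | hkn
    · simp [Ffac]
    have hk' : k ≤ n := by omega
    set b := n + 1 - k with hb
    have hb1 : 1 ≤ b := by omega
    have hfib : Nat.fib (n+1) = Nat.fib k * Nat.fib (b-1) + Nat.fib (k+1) * Nat.fib b := by
      have h1 := Nat.fib_add k (b-1)
      have h2 : k + (b-1) + 1 = n + 1 := by omega
      have h3 : (b-1) + 1 = b := by omega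
      rw [h2, h3] at h1
      exact h1
    have hFk : Ffac k = Ffac (k-1) * Nat.fib k := by
      have hkk : k = (k-1) + 1 := by omega
      rw [hkk, Ffac_succ, ← hkk]
    have hFb : Ffac b = Ffac (b-1) * Nat.fib b := by
      have hbb : b = (b-1) + 1 := by omega
      rw [hbb, Ffac_succ, ← hbb]
    have d1 : Ffac k * Ffac b ∣ Ffac n * (Nat.fib k * Nat.fib (b-1)) := by
      have hih := ih (k-1) (by omega)
      have hnk : n - (k-1) = b := by omega
      rw [hnk] at hih
      calc Ffac k * Ffac b = (Ffac (k-1) * Ffac b) * Nat.fib k := by rw [hFk]; ring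
        _ ∣ (Ffac n * Nat.fib k) := mul_dvd_mul hih dvd_rfl
        _ ∣ Ffac n * (Nat.fib k * Nat.fib (b-1)) := ⟨Nat.fib (b-1), by ring⟩
    have d2 : Ffac k * Ffac b ∣ Ffac n * (Nat.fib (k+1) * Nat.fib b) := by
      have hih := ih k hk'
      have hnk : n - k = b - 1 := by omega
      rw [hnk] at hih
      calc Ffac k * Ffac b = (Ffac k * Ffac (b-1)) * Nat.fib b := by rw [hFb]; ring
        _ ∣ Ffac n * Nat.fib b := mul_dvd_mul hih dvd_rfl
        _ ∣ Ffac n * (Nat.fib (k+1) * Nat.fib b) := ⟨Nat.fib (k+1), by ring⟩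
    have : Ffac (n+1) = Ffac n * (Nat.fib k * Nat.fib (b-1)) + Ffac n * (Nat.fib (k+1) * Nat.fib b) := by
      rw [Ffac_succ, hfib]; ring
    rw [this]
    exact dvd_add d1 d2

/-- The Fibonacci sequence is cobweb-admissible: the Fibonomial
coefficient Fib_n!/(Fib_k! · Fib_{n-k}!) is an integer for all 0 ≤ k ≤ n. -/
theorem fibonacci_cobweb_admissible (n k : ℕ) (h : k ≤ n) :
    (∏ i ∈ Finset.Icc 1 k, Nat.fib i) * (∏ i ∈ Finset.Icc 1 (n - k), Nat.fib i) ∣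
      ∏ i ∈ Finset.Icc 1 n, Nat.fib i := by
  exact Ffac_key n k h
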